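/- For all n ≥ 2, the 3×3 determinant det[[f(n,x,s)², f(n-1,x,qs)², f(n-2,x,q²s)²], [f(n+1,x,s)², f(n,x,qs)², f(n-1,x,q²s)²], [f(n+2,x,s)², f(n+1,x,qs)², f(n,x,q²s)²]] equals 2(-1)^n x² s^{3n-4} q^{(n+1)(3n-4)/2}. -/
import Mathlib


/-- Carlitz q-Fibonacci polynomials. -/
def qFib (q x s : ℝ) : ℕ → ℝ
  | 0 => 0
  | 1 => 1
  | (n+2) => x * qFib q x s (n+1) + q^n * s * qFib q x s n

/-- Auxiliary exponent: tri k = k(k+3)/2. -/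
def tri : ℕ → ℕ
  | 0 => 0
  | (k+1) => tri k + (k+2)

lemma two_tri (k : ℕ) : 2 * tri k = k * (k + 3) := by
  induction k with
  | zero => rfl
  | succ k ih =>
    have : 2 * tri (k+1) = 2 * tri k + 2*(k+2) := by simp [tri]; ring
    rw [this, ih]; ring

/-- Second-form recurrence: f(m+2, s) = x f(m+1, qs) + q s f(m, q² s). -/
lemma qFib_rec2 (q x s : ℝ) : ∀ m : ℕ,
    qFib q x s (m+2) = x * qFib q x (q*s) (m+1) + q * s * qFib q x (q^2*s) m := by
  have key : ∀ m : ℕ,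
      (qFib q x s (m+2) = x * qFib q x (q*s) (m+1) + q * s * qFib q x (q^2*s) m) ∧
      (qFib q x s (m+3) = x * qFib q x (q*s) (m+2) + q * s * qFib q x (q^2*s) (m+1)) := by
    intro m
    induction m with
    | zero => constructor <;> (simp [qFib]; try ring)
    | succ m ih =>
      obtain ⟨ih1, ih2⟩ := ih
      refine ⟨ih2, ?_⟩
      have h1 : qFib q x s (m+4) = x * qFib q x s (m+3) + q^(m+2) * s * qFib q x s (m+2) := by
        simp [qFib]
      have h2 : qFib q x (q*s) (m+3) = x * qFib q x (q*s) (m+2) + q^(m+1) * (q*s) * qFib q x (q*s) (m+1) := by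
        simp [qFib]
      have h3 : qFib q x (q^2*s) (m+2) = x * qFib q x (q^2*s) (m+1) + q^m * (q^2*s) * qFib q x (q^2*s) m := by
        simp [qFib]
      rw [h1, ih1, ih2]
      rw [h2, h3]
      ring
  exact fun m => (key m).1

/-- q-Cassini identity. -/
lemma qFib_cassini (q x s : ℝ) : ∀ k : ℕ,
    qFib q x (q*s) (k+1) * qFib q x (q^2*s) (k+1)
      - qFib q x (q*s) (k+2) * qFib q x (q^2*s) k
    = (-1)^k * q^(tri k) * s^k := by
  intro k
  induction k with
  | zero => simp [qFib, tri]
  | succ k ih =>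
    have h2 : qFib q x (q*s) (k+3) = x * qFib q x (q*s) (k+2) + q^(k+1) * (q*s) * qFib q x (q*s) (k+1) := by
      simp [qFib]
    have h3 : qFib q x (q^2*s) (k+2) = x * qFib q x (q^2*s) (k+1) + q^k * (q^2*s) * qFib q x (q^2*s) k := by
      simp [qFib]
    rw [h2, h3]
    have ht : tri (k+1) = tri k + (k+2) := rfl
    rw [ht]
    ring_nf
    ring_nf at ih
    linear_combination (-(q^(k+2)) * s) * ih

theorem qFib_sq_det (q x s : ℝ) (n : ℕ) (hn : 2 ≤ n) :
    Matrix.det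
      !![qFib q x s n ^ 2,     qFib q x (q*s) (n-1) ^ 2, qFib q x (q^2*s) (n-2) ^ 2;
         qFib q x s (n+1) ^ 2, qFib q x (q*s) n ^ 2,     qFib q x (q^2*s) (n-1) ^ 2;
         qFib q x s (n+2) ^ 2, qFib q x (q*s) (n+1) ^ 2, qFib q x (q^2*s) n ^ 2]
      = 2 * (-1)^n * x^2 * s^(3*n-4) * q^((n+1)*(3*n-4)/2) := by
  obtain ⟨m, rfl⟩ : ∃ m, n = m + 2 := ⟨n - 2, by omega⟩
  have e1 : m + 2 - 1 = m + 1 := by omega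
  have e2 : m + 2 - 2 = m := by omega
  have e3 : 3 * (m+2) - 4 = 3*m + 2 := by omega
  have e4 : (m+2+1) * (3*m+2) / 2 = 3 * tri m + (m + 3) := by
    have h := two_tri m
    have : (m+2+1) * (3*m+2) = 2 * (3 * tri m + (m + 3)) := by nlinarith [h]
    omega
  rw [e1, e2, e3, e4]
  rw [Matrix.det_fin_three]
  simp only [Matrix.of_apply, Matrix.cons_val', Matrix.cons_val_zero, Matrix.cons_val_one,
    Matrix.head_cons, Matrix.empty_val', Matrix.cons_val_fin_one, Matrix.head_fin_const,
    Matrix.cons_val_two, Matrix.tail_cons]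
  -- abbreviations
  set a0 := qFib q x (q*s) (m+1) with ha0
  set a1 := qFib q x (q*s) (m+2) with ha1
  set b0 := qFib q x (q^2*s) m with hb0
  set b1 := qFib q x (q^2*s) (m+1) with hb1
  have r0 : qFib q x s (m+2) = x * a0 + q * s * b0 := qFib_rec2 q x s m
  have r1 : qFib q x s (m+3) = x * a1 + q * s * b1 := qFib_rec2 q x s (m+1)
  have h2 : qFib q x (q*s) (m+3) = x * a1 + q^(m+1) * (q*s) * a0 := by
    simp [qFib, ha0, ha1]
  have h3 : qFib q x (q^2*s) (m+2) = x * b1 + q^m * (q^2*s) * b0 := by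
    simp [qFib, hb0, hb1]
  have r2 : qFib q x s (m+4) = x * (x * a1 + q^(m+1) * (q*s) * a0)
      + q * s * (x * b1 + q^m * (q^2*s) * b0) := by
    rw [show m + 4 = (m+2) + 2 from rfl, qFib_rec2 q x s (m+2)]
    rw [show m + 2 + 1 = m + 3 from rfl, h2, h3]
  have cass : a0 * b1 - a1 * b0 = (-1)^m * q^(tri m) * s^m := qFib_cassini q x s m
  rw [show m + 2 + 1 = m + 3 from rfl, show m + 2 + 2 = m + 4 from rfl, r0, r1, r2, h2, h3]
  have hsign : ((-1:ℝ))^(m+2) = (-1)^m := by rw [pow_add]; norm_num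
  rw [hsign]
  obtain ⟨e, he⟩ : ∃ e : ℝ, ((-1:ℝ))^m = e := ⟨_, rfl⟩
  rw [he] at cass ⊢
  have he2 : e^2 = 1 := by rw [← he, ← pow_mul, mul_comm, pow_mul]; norm_num
  linear_combination (2*x^2*q*s*(q^(m+2)*s) *
    ((a0*b1-a1*b0)^2 + (a0*b1-a1*b0)*(e * q^(tri m) * s^m)
      + (e * q^(tri m) * s^m)^2)) * cass
    + (2*x^2*q^3*q^m*q^(3*tri m)*s^2*s^(3*m)*e) * he2
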